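/- Fix c ∈ F^L with deg c = d ≥ 1. Then the set of monic irreducible polynomials g of degree t over F having no roots in E and satisfying c ∈ C(g^{−1},t) has cardinality at most ⌊(d−1)/t⌋. -/

import Mathlib

open Polynomial

noncomputable section

/-- The orbit of `j : ZMod N` under multiplication by `q`. -/
def qOrbit (N q : ℕ) (j : ZMod N) : Set (ZMod N) :=
  Set.range fun k : ℕ => (q : ZMod N) ^ k * j

/-- The set `L` of orbits of `ZMod N` under multiplication by `q`. -/
def orbitSet (N q : ℕ) : Set (Set (ZMod N)) :=
  {l | ∃ j : ZMod N, l = qOrbit N q j}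

/-- `β ^ j` for a residue class `j`. -/
def bpow {E : Type*} [Monoid E] {N : ℕ} (β : E) (j : ZMod N) : E :=
  β ^ j.val

/-- The check-matrix entry `h_{i l} = ∑_{j ∈ l} ρ(β^j) β^{i j}`, as an element of `E`. -/
def hEntry {F E : Type*} [CommSemiring F] [CommSemiring E] [Algebra F E] {N : ℕ}
    (β : E) (ρ : Polynomial F) (i : ℕ) (l : Set (ZMod N)) : E :=
  ∑ᶠ j ∈ l, Polynomial.aeval (bpow β j) ρ * bpow β j ^ i

/-- The code `C(ρ, t)` inside `F^L`. -/
def codeSet (F E : Type*) [Field F] [Field E] [Algebra F E] (N q : ℕ)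
    (β : E) (ρ : Polynomial F) (t : ℕ) : Set (↥(orbitSet N q) → F) :=
  {c | ∀ i < t, ∑ᶠ l : orbitSet N q,
    algebraMap F E (c l) * hEntry β ρ i (l : Set (ZMod N)) = 0}

open scoped Classical in
/-- `deg c = ∑_{l : c_l ≠ 0} |l|`. -/
def wdeg {F : Type*} [Zero F] {N q : ℕ} (c : ↥(orbitSet N q) → F) : ℕ :=
  ∑ᶠ l : orbitSet N q, if c l ≠ 0 then (l : Set (ZMod N)).ncard else 0

/-!
On the `d` positions `j ∈ ZMod (q ^ m - 1)` where it is nonzero, the word `c` gives weights `c_j`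
at the distinct nodes `β ^ j`. Since `g⁻¹(β ^ j) = g(β ^ j)⁻¹`, the condition `c ∈ C(g⁻¹, t)` says
that the first `t = deg g` moments of the weights `c_j / g(β ^ j)` vanish. This is the Goppa
condition: `g` divides the numerator `P = ∑ⱼ c_j ∏_{k ≠ j} (X - β ^ k)` of `∑ⱼ c_j / (X - β ^ j)`.
Now `P ≠ 0` has degree at most `d - 1`, and distinct monic irreducible `g` are coprime, so the
product of all admissible `g`, each of degree `t`, divides `P`.
-/

section Orbits

variable {N q : ℕ}

lemma self_mem_qOrbit (j : ZMod N) : j ∈ qOrbit N q j := ⟨0, by simp⟩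

lemma qOrbit_subset_of_mem {j j' : ZMod N} (h : j' ∈ qOrbit N q j) :
    qOrbit N q j' ⊆ qOrbit N q j := by
  obtain ⟨a, rfl⟩ := h
  rintro _ ⟨k, rfl⟩
  exact ⟨k + a, by simp only [pow_add, mul_assoc]⟩

lemma mem_qOrbit_comm (hq : IsOfFinOrder (q : ZMod N)) {j j' : ZMod N}
    (h : j' ∈ qOrbit N q j) : j ∈ qOrbit N q j' := by
  obtain ⟨a, rfl⟩ := h
  have ha : a ≤ orderOf (q : ZMod N) * a := Nat.le_mul_of_pos_left a hq.orderOf_pos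
  refine ⟨orderOf (q : ZMod N) * a - a, ?_⟩
  simp only [← mul_assoc, pow_sub_mul_pow _ ha, pow_mul, pow_orderOf_eq_one, one_pow, one_mul]

lemma qOrbit_eq_of_mem (hq : IsOfFinOrder (q : ZMod N)) {j j' : ZMod N}
    (h : j' ∈ qOrbit N q j) : qOrbit N q j' = qOrbit N q j :=
  (qOrbit_subset_of_mem h).antisymm (qOrbit_subset_of_mem (mem_qOrbit_comm hq h))

def orbitOf (N q : ℕ) (j : ZMod N) : orbitSet N q := ⟨qOrbit N q j, j, rfl⟩

lemma mem_iff_orbitOf_eq (hq : IsOfFinOrder (q : ZMod N)) (l : orbitSet N q) (j : ZMod N) :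
    j ∈ (l : Set (ZMod N)) ↔ orbitOf N q j = l := by
  obtain ⟨l, j₀, rfl⟩ := l
  refine ⟨fun hj => Subtype.ext (qOrbit_eq_of_mem hq hj), fun hj => ?_⟩
  rw [← hj]
  exact self_mem_qOrbit j

lemma finsum_orbitSet_finsum_mem [NeZero N] (hq : IsOfFinOrder (q : ZMod N))
    {M : Type*} [AddCommMonoid M] (φ : orbitSet N q → ZMod N → M) :
    ∑ᶠ l : orbitSet N q, ∑ᶠ j ∈ (l : Set (ZMod N)), φ l j = ∑ j, φ (orbitOf N q j) j := by
  classical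
  have : Fintype (orbitSet N q) := Fintype.ofFinite _
  have hl (l : orbitSet N q) : (l : Set (ZMod N)) = ↑(Finset.univ.filter (orbitOf N q · = l)) := by
    ext j
    simp [mem_iff_orbitOf_eq hq]
  calc ∑ᶠ l : orbitSet N q, ∑ᶠ j ∈ (l : Set (ZMod N)), φ l j
      = ∑ l, ∑ j with orbitOf N q j = l, φ (orbitOf N q j) j := by
        rw [finsum_eq_sum_of_fintype]
        refine Finset.sum_congr rfl fun l _ => ?_
        rw [hl, finsum_mem_coe_finset]
        exact Finset.sum_congr rfl fun j hj => by rw [(Finset.mem_filter.mp hj).2]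
    _ = ∑ j, φ (orbitOf N q j) j := Finset.sum_fiberwise _ _ _

open scoped Classical in
def wordSupport {F : Type*} [Zero F] [NeZero N] (c : orbitSet N q → F) :
    Finset (ZMod N) :=
  {j | c (orbitOf N q j) ≠ 0}

lemma wdeg_eq_card_wordSupport {F : Type*} [Zero F] [NeZero N]
    (hq : IsOfFinOrder (q : ZMod N)) (c : orbitSet N q → F) :
    wdeg c = (wordSupport c).card := by
  classical
  have hl (l : orbitSet N q) : (if c l ≠ 0 then (l : Set (ZMod N)).ncard else 0)
      = ∑ᶠ j ∈ (l : Set (ZMod N)), if c l ≠ 0 then 1 else 0 := by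
    split_ifs <;> simp [finsum_one]
  rw [wdeg, wordSupport, Finset.card_filter]
  simp_rw [hl]
  rw [finsum_orbitSet_finsum_mem hq]

lemma mem_codeSet_iff {F E : Type*} [Field F] [Field E] [Algebra F E] [NeZero N]
    (hq : IsOfFinOrder (q : ZMod N)) {β : E} {ρ : F[X]} {t : ℕ} {c : orbitSet N q → F} :
    c ∈ codeSet F E N q β ρ t ↔ ∀ i < t,
      ∑ j, algebraMap F E (c (orbitOf N q j)) * (aeval (bpow β j) ρ * bpow β j ^ i) = 0 := by
  simp_rw [codeSet, Set.mem_ofPred_eq, hEntry, mul_finsum_mem, finsum_orbitSet_finsum_mem hq]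

end Orbits

section DifferenceQuotient

variable {K : Type*} [Field K]

def diffQuotient (g : K[X]) (a : K) : K[X] :=
  ∑ s ∈ Finset.range (g.natDegree + 1),
    C (g.coeff s) * ∑ i ∈ Finset.range s, X ^ i * C a ^ (s - 1 - i)

lemma diffQuotient_mul_X_sub_C (g : K[X]) (a : K) :
    diffQuotient g a * (X - C a) = g - C (g.eval a) := by
  have hs (s : ℕ) : C (g.coeff s) * (∑ i ∈ Finset.range s, X ^ i * C a ^ (s - 1 - i)) * (X - C a)
      = monomial s (g.coeff s) - C (g.coeff s * a ^ s) := by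
    rw [mul_assoc, geom_sum₂_mul, C_mul, ← C_pow, mul_sub, C_mul_X_pow_eq_monomial]
  rw [diffQuotient, Finset.sum_mul, Finset.sum_congr rfl fun s _ => hs s, Finset.sum_sub_distrib,
    ← map_sum, ← eval_eq_sum_range, ← as_sum_range]

/-- The coefficient of `X ^ i` in the sum only involves moments `∑ⱼ u_j v_j ^ k` with
`k < deg g`. -/
lemma sum_C_mul_diffQuotient_eq_zero {ι : Type*} (g : K[X]) (s : Finset ι) (v u : ι → K)
    (hu : ∀ i < g.natDegree, ∑ j ∈ s, u j * v j ^ i = 0) :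
    ∑ j ∈ s, C (u j) * diffQuotient g (v j) = 0 := by
  have hexpand (j : ι) : C (u j) * diffQuotient g (v j)
      = ∑ k ∈ Finset.range (g.natDegree + 1), ∑ i ∈ Finset.range k,
          C (g.coeff k) * X ^ i * C (u j * v j ^ (k - 1 - i)) := by
    simp only [diffQuotient, Finset.mul_sum, C_mul, C_pow]
    exact Finset.sum_congr rfl fun _ _ => Finset.sum_congr rfl fun _ _ => by ring
  simp_rw [hexpand]
  rw [Finset.sum_comm]
  refine Finset.sum_eq_zero fun k hk => ?_
  rw [Finset.sum_comm]
  refine Finset.sum_eq_zero fun i hi => ?_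
  rw [Finset.mem_range] at hk hi
  rw [← Finset.mul_sum, ← map_sum, hu (k - 1 - i) (by omega), map_zero, mul_zero]

end DifferenceQuotient

section Nodal

open Lagrange

variable {K ι : Type*} [Field K] [DecidableEq ι]

lemma dvd_sum_C_mul_nodal_erase (g : K[X]) (s : Finset ι) (v u : ι → K)
    (hu : ∀ i < g.natDegree, ∑ j ∈ s, u j * v j ^ i = 0) :
    g ∣ ∑ j ∈ s, C (u j * g.eval (v j)) * nodal (s.erase j) v := by
  refine ⟨∑ j ∈ s, C (u j) * nodal (s.erase j) v, ?_⟩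
  have hterm (j : ι) (hj : j ∈ s) :
      g * (C (u j) * nodal (s.erase j) v) - C (u j * g.eval (v j)) * nodal (s.erase j) v
        = C (u j) * diffQuotient g (v j) * nodal s v := by
    rw [nodal_eq_mul_nodal_erase hj, C_mul]
    linear_combination -(C (u j) * nodal (s.erase j) v) * diffQuotient_mul_X_sub_C g (v j)
  have hdiff : g * ∑ j ∈ s, C (u j) * nodal (s.erase j) v
      - ∑ j ∈ s, C (u j * g.eval (v j)) * nodal (s.erase j) v = 0 := by
    rw [Finset.mul_sum, ← Finset.sum_sub_distrib, Finset.sum_congr rfl hterm, ← Finset.sum_mul,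
      sum_C_mul_diffQuotient_eq_zero g s v u hu, zero_mul]
  exact (sub_eq_zero.mp hdiff).symm

lemma sum_C_mul_nodal_erase_ne_zero {s : Finset ι} {v B : ι → K} (hv : Set.InjOn v s)
    (hB : ∀ j ∈ s, B j ≠ 0) (hs : s.Nonempty) :
    ∑ j ∈ s, C (B j) * nodal (s.erase j) v ≠ 0 := by
  obtain ⟨j₀, hj₀⟩ := hs
  intro h
  have heval := congrArg (eval (v j₀)) h
  rw [eval_finsetSum, Finset.sum_eq_single j₀ (fun j _ hj => by
      rw [eval_mul, eval_nodal_at_node (Finset.mem_erase.mpr ⟨Ne.symm hj, hj₀⟩), mul_zero])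
      (absurd hj₀), eval_mul, eval_C, eval_zero] at heval
  refine mul_ne_zero (hB j₀ hj₀) (eval_nodal_not_at_node fun k hk hvk => ?_) heval
  exact (Finset.mem_erase.mp hk).1 (hv (Finset.mem_of_mem_erase hk) hj₀ hvk.symm)

lemma natDegree_sum_C_mul_nodal_erase_le (s : Finset ι) (v B : ι → K) :
    (∑ j ∈ s, C (B j) * nodal (s.erase j) v).natDegree ≤ s.card - 1 := by
  refine natDegree_sum_le_of_forall_le _ _ fun j hj => (natDegree_C_mul_le _ _).trans ?_
  rw [natDegree_nodal, Finset.card_erase_of_mem hj]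

end Nodal

lemma ncard_mul_le_natDegree_of_forall_map_dvd {K L : Type*} [Field K] [CommRing L] [IsDomain L]
    (f : K →+* L) {s : Set K[X]} {t : ℕ} {P : L[X]} (hP : P ≠ 0)
    (hs : ∀ g ∈ s, g.Monic ∧ Irreducible g ∧ g.natDegree = t ∧ g.map f ∣ P) :
    s.ncard * t ≤ P.natDegree := by
  rcases s.finite_or_infinite with hfin | hinf
  swap
  · simp [hinf.ncard]
  have hT : ∀ g ∈ hfin.toFinset, g.Monic ∧ Irreducible g ∧ g.natDegree = t ∧ g.map f ∣ P :=
    fun g hg => hs g (hfin.mem_toFinset.mp hg)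
  have hcoprime :
      (hfin.toFinset : Set K[X]).Pairwise (Function.onFun IsCoprime fun g => g.map f) := by
    intro g₁ h₁ g₂ h₂ hne
    obtain ⟨hm₁, hi₁, -⟩ := hT g₁ h₁
    obtain ⟨hm₂, hi₂, -⟩ := hT g₂ h₂
    refine IsCoprime.map (hi₁.coprime_iff_not_dvd.mpr fun hdvd => hne ?_) (mapRingHom f)
    exact eq_of_monic_of_associated hm₁ hm₂ (hi₁.associated_of_dvd hi₂ hdvd)
  calc s.ncard * t = (∏ g ∈ hfin.toFinset, g.map f).natDegree := by
        rw [natDegree_prod_of_monic _ _ fun g hg => (hT g hg).1.map f,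
          Finset.sum_congr rfl fun g hg => by rw [natDegree_map, (hT g hg).2.2.1],
          Finset.sum_const, smul_eq_mul, Set.ncard_eq_toFinset_card s hfin]
    _ ≤ P.natDegree :=
        natDegree_le_of_dvd (Finset.prod_dvd_of_coprime hcoprime fun g hg => (hT g hg).2.2.2) hP

lemma isOfFinOrder_natCast_zmod_pow_sub_one {q m : ℕ} (hq : 0 < q) (hm : 0 < m) :
    IsOfFinOrder (q : ZMod (q ^ m - 1)) := by
  refine isOfFinOrder_iff_pow_eq_one.mpr ⟨m, hm, ?_⟩
  have hqm : q ^ m = (q ^ m - 1) + 1 := (Nat.sub_add_cancel (Nat.one_le_pow _ _ hq)).symm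
  rw [← Nat.cast_pow, hqm, Nat.cast_add, ZMod.natCast_self, Nat.cast_one, zero_add]

lemma bpow_injective {E : Type*} [Monoid E] {β : E} {N : ℕ} [NeZero N] (hβ : orderOf β = N) :
    Function.Injective (bpow β : ZMod N → E) := fun a b hab =>
  ZMod.val_injective N <|
    pow_injOn_Iio_orderOf (by simpa [hβ] using a.val_lt) (by simpa [hβ] using b.val_lt) hab

open Lagrange in
lemma map_dvd_of_mem_codeSet {F E : Type*} [Field F] [Field E] [Algebra F E] {N q : ℕ} [NeZero N]
    (hq : IsOfFinOrder (q : ZMod N)) {β : E} (hβ : β ^ N = 1) {c : orbitSet N q → F}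
    {g ginv : F[X]} (hginv : X ^ N - 1 ∣ g * ginv - 1)
    (hc : c ∈ codeSet F E N q β ginv g.natDegree) :
    g.map (algebraMap F E) ∣ ∑ j ∈ wordSupport c,
      C (algebraMap F E (c (orbitOf N q j))) * nodal ((wordSupport c).erase j) (bpow β) := by
  classical
  have hinv (j : ZMod N) : aeval (bpow β j) g * aeval (bpow β j) ginv = 1 := by
    obtain ⟨w, hw⟩ := hginv
    have hroot : aeval (bpow β j) (X ^ N - 1 : F[X]) = 0 := by
      rw [bpow, map_sub, map_pow, aeval_X, ← pow_mul, mul_comm, pow_mul, hβ, one_pow, map_one,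
        sub_self]
    have := congrArg (aeval (bpow β j)) hw
    rwa [map_sub, map_one, map_mul, map_mul, hroot, zero_mul, sub_eq_zero] at this
  set u : ZMod N → E := fun j => algebraMap F E (c (orbitOf N q j)) * aeval (bpow β j) ginv
  have hu : ∀ i < (g.map (algebraMap F E)).natDegree,
      ∑ j ∈ wordSupport c, u j * bpow β j ^ i = 0 := by
    intro i hi
    rw [natDegree_map] at hi
    rw [wordSupport, Finset.sum_filter_of_ne fun j _ hj h => by simp [u, h] at hj]
    simpa only [u, mul_assoc] using (mem_codeSet_iff hq).mp hc i hi
  convert dvd_sum_C_mul_nodal_erase _ (wordSupport c) (bpow β) u hu using 4 with j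
  rw [eval_map_algebraMap, mul_assoc, mul_comm (aeval _ ginv), hinv, mul_one]

theorem card_Gset_fixed_word_le_general (q m : ℕ) (hm : 0 < m)
    (F E : Type*) [Field F] [Field E] [Fintype F] [Algebra F E]
    (hF : Fintype.card F = q)
    (β : E) (hβ : orderOf β = q ^ m - 1) (t : ℕ) (ht : 0 < t)
    (c : ↥(orbitSet (q ^ m - 1) q) → F) (d : ℕ) (hd : 0 < d) (hcd : wdeg c = d) :
    {g : Polynomial F | g.Monic ∧ Irreducible g ∧ g.natDegree = t ∧
      (∀ x : E, Polynomial.aeval x g ≠ 0) ∧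
      ∃ ginv : Polynomial F, ginv.degree < ((q ^ m - 1 : ℕ) : WithBot ℕ) ∧
        ((X : Polynomial F) ^ (q ^ m - 1) - 1 ∣ g * ginv - 1) ∧
        c ∈ codeSet F E (q ^ m - 1) q β ginv t}.ncard ≤ (d - 1) / t := by
  have hq : 1 < q := hF ▸ Fintype.one_lt_card
  have : NeZero (q ^ m - 1) := ⟨by have := Nat.one_lt_pow hm.ne' hq; omega⟩
  have hqN := isOfFinOrder_natCast_zmod_pow_sub_one (by omega : 0 < q) hm
  have hcard : (wordSupport c).card = d := by rw [← hcd, wdeg_eq_card_wordSupport hqN]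
  have hB : ∀ j ∈ wordSupport c, algebraMap F E (c (orbitOf _ q j)) ≠ 0 := fun j hj => by
    simpa [wordSupport] using hj
  rw [Nat.le_div_iff_mul_le ht, ← hcard]
  refine (ncard_mul_le_natDegree_of_forall_map_dvd (algebraMap F E)
    (sum_C_mul_nodal_erase_ne_zero (bpow_injective hβ).injOn hB ?_) ?_).trans
    (natDegree_sum_C_mul_nodal_erase_le _ _ _)
  · exact Finset.card_pos.mp (hcard ▸ hd)
  rintro g ⟨hmonic, hirr, hdeg, -, ginv, -, hginv, hc⟩
  exact ⟨hmonic, hirr, hdeg,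
    map_dvd_of_mem_codeSet hqN (hβ ▸ pow_orderOf_eq_one β) hginv (hdeg ▸ hc)⟩

/-- For a fixed word `c` of degree `d ≥ 1`, the set of monic irreducible polynomials `g`
of degree `t` over `F` with no roots in `E` and `c ∈ C(g⁻¹, t)` has at most
`⌊(d−1)/t⌋` elements. -/
theorem card_Gset_fixed_word_le (q m : ℕ) (hm : 0 < m) (hqm : Nat.Coprime q m)
    (F E : Type*) [Field F] [Field E] [Fintype F] [Fintype E] [Algebra F E]
    (hF : Fintype.card F = q) (hE : Fintype.card E = q ^ m)
    (β : E) (hβ : orderOf β = q ^ m - 1) (t : ℕ) (ht : 0 < t)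
    (c : ↥(orbitSet (q ^ m - 1) q) → F) (d : ℕ) (hd : 0 < d) (hcd : wdeg c = d) :
    {g : Polynomial F | g.Monic ∧ Irreducible g ∧ g.natDegree = t ∧
      (∀ x : E, Polynomial.aeval x g ≠ 0) ∧
      ∃ ginv : Polynomial F, ginv.degree < ((q ^ m - 1 : ℕ) : WithBot ℕ) ∧
        ((X : Polynomial F) ^ (q ^ m - 1) - 1 ∣ g * ginv - 1) ∧
        c ∈ codeSet F E (q ^ m - 1) q β ginv t}.ncard ≤ (d - 1) / t :=
  card_Gset_fixed_word_le_general q m hm F E hF β hβ t ht c d hd hcd
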